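/- arXiv:1607.02618 — 3 statements merged into one kernel-verified Lean document; each statement's English description precedes it below -/
import Mathlib

section
/- There exists an automorphism of the group K sending a ↦ b^(−r)·c^(−1), b ↦ a^r·b^(−r)·c^r, c ↦ c^r, and h ↦ h·c^(−r). -/
/-!
An automorphism of `K = (ZMod n)³ ⋊ ZMod 3` may be sought in the form `(v, t) ↦ (e v + f t, t)`
with `e` a linear automorphism of `(ZMod n)³`: it is multiplicative exactly when `f` is a crossed
homomorphism, `f (i + j) = r ^ j • f i + f j`. The images of `a, b, c` prescribe `e` (a matrix
of determinant `r³ = 1`), the image of `h` prescribes `f 1 = -r • e₃`, and the relation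
`r² + r + 1 = 0` is what lets `f` close up around the cycle of length `3`.
-/

/-- The group `K = (ZMod n)³ ⋊ Z₃`, where the generator of `Z₃` acts on `(ZMod n)³`
by scalar multiplication by `r`.  An element is a pair `⟨v, t⟩` with
`v ∈ (ZMod n)³` and `t ∈ ZMod 3`; multiplication is
`⟨v, i⟩ * ⟨w, j⟩ = ⟨r^j • v + w, i + j⟩`, so that with `a = ⟨(1,0,0),0⟩`,
`b = ⟨(0,1,0),0⟩`, `c = ⟨(0,0,1),0⟩`, `h = ⟨0,1⟩` the presentation
`aⁿ = bⁿ = cⁿ = h³ = [a,b] = [a,c] = [b,c] = 1`, `h⁻¹ah = a^r`, `h⁻¹bh = b^r`,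
`h⁻¹ch = c^r` holds. -/
@[ext]
structure Kgrp (n : ℕ) (r : ZMod n) (hr : r ^ 2 + r + 1 = 0) : Type where
  v : ZMod n × ZMod n × ZMod n
  t : ZMod 3

namespace Kgrp

variable {n : ℕ} {r : ZMod n} {hr : r ^ 2 + r + 1 = 0}

instance : Mul (Kgrp n r hr) :=
  ⟨fun x y => ⟨(r ^ y.t.val) • x.v + y.v, x.t + y.t⟩⟩

instance : One (Kgrp n r hr) := ⟨⟨0, 0⟩⟩

instance : Inv (Kgrp n r hr) :=
  ⟨fun x => ⟨-((r ^ (-x.t).val) • x.v), -x.t⟩⟩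

@[simp] lemma mul_def (x y : Kgrp n r hr) :
    x * y = ⟨(r ^ y.t.val) • x.v + y.v, x.t + y.t⟩ := rfl

@[simp] lemma one_def : (1 : Kgrp n r hr) = ⟨0, 0⟩ := rfl

@[simp] lemma inv_def (x : Kgrp n r hr) :
    x⁻¹ = ⟨-((r ^ (-x.t).val) • x.v), -x.t⟩ := rfl

lemma r_cube (hr : r ^ 2 + r + 1 = 0) : r ^ 3 = 1 := by
  linear_combination (r - 1) * hr

lemma r_pow_val_add (hr : r ^ 2 + r + 1 = 0) (i j : ZMod 3) :
    r ^ i.val * r ^ j.val = r ^ (i + j).val := by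
  have h3 : r ^ 3 = 1 := r_cube hr
  have hval : (i + j).val = (i.val + j.val) % 3 := ZMod.val_add i j
  rw [hval, ← pow_add]
  conv_lhs => rw [← Nat.mod_add_div (i.val + j.val) 3]
  rw [pow_add, pow_mul, h3, one_pow, mul_one]

instance : Group (Kgrp n r hr) :=
  Group.ofLeftAxioms
    (fun x y z => by
      have hs : r ^ z.t.val * r ^ y.t.val = r ^ (y.t + z.t).val := by
        rw [r_pow_val_add hr, add_comm]
      refine Kgrp.ext ?_ ?_
      · show r ^ z.t.val • ((r ^ y.t.val) • x.v + y.v) + z.v =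
            r ^ (y.t + z.t).val • x.v + ((r ^ z.t.val) • y.v + z.v)
        rw [smul_add, smul_smul, hs, add_assoc]
      · show x.t + y.t + z.t = x.t + (y.t + z.t)
        exact add_assoc _ _ _)
    (fun x => by
      refine Kgrp.ext ?_ ?_
      · show r ^ x.t.val • (0 : ZMod n × ZMod n × ZMod n) + x.v = x.v
        rw [smul_zero, zero_add]
      · show 0 + x.t = x.t
        exact zero_add _)
    (fun x => by
      have hs : r ^ x.t.val * r ^ (-x.t).val = 1 := by
        rw [r_pow_val_add hr]
        simp
      refine Kgrp.ext ?_ ?_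
      · show r ^ x.t.val • (-(r ^ (-x.t).val • x.v)) + x.v = 0
        rw [smul_neg, smul_smul, hs, one_smul, neg_add_cancel]
      · show -x.t + x.t = 0
        exact neg_add_cancel _)

/-- The generator `a = ((1,0,0),0)` of `K`. -/
def gena (n : ℕ) (r : ZMod n) (hr : r ^ 2 + r + 1 = 0) : Kgrp n r hr := ⟨(1, 0, 0), 0⟩

/-- The generator `b = ((0,1,0),0)` of `K`. -/
def genb (n : ℕ) (r : ZMod n) (hr : r ^ 2 + r + 1 = 0) : Kgrp n r hr := ⟨(0, 1, 0), 0⟩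

/-- The generator `c = ((0,0,1),0)` of `K`. -/
def genc (n : ℕ) (r : ZMod n) (hr : r ^ 2 + r + 1 = 0) : Kgrp n r hr := ⟨(0, 0, 1), 0⟩

/-- The generator `h = ((0,0,0),1)` of `K`. -/
def genh (n : ℕ) (r : ZMod n) (hr : r ^ 2 + r + 1 = 0) : Kgrp n r hr := ⟨(0, 0, 0), 1⟩

end Kgrp

namespace Kgrp

variable {n : ℕ} {r : ZMod n} {hr : r ^ 2 + r + 1 = 0}

lemma neZero_of_sq_add_add_one_eq_zero (hr : r ^ 2 + r + 1 = 0) : NeZero n := by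
  refine ⟨fun hn => ?_⟩
  subst hn
  have no_int_root (m : ℤ) : m ^ 2 + m + 1 ≠ 0 := by nlinarith [sq_nonneg (2 * m + 1)]
  exact no_int_root r hr

lemma mk_zero_pow (v : ZMod n × ZMod n × ZMod n) (k : ℕ) :
    (⟨v, 0⟩ : Kgrp n r hr) ^ k = ⟨(k : ZMod n) • v, 0⟩ := by
  induction k with
  | zero => ext <;> simp
  | succ k ih => ext <;> simp [pow_succ, ih, add_smul]

lemma mk_zero_pow_val [NeZero n] (v : ZMod n × ZMod n × ZMod n) (s : ZMod n) :
    (⟨v, 0⟩ : Kgrp n r hr) ^ s.val = ⟨s • v, 0⟩ := by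
  rw [mk_zero_pow, ZMod.natCast_zmod_val]

def affineEquiv (e : (ZMod n × ZMod n × ZMod n) ≃ₗ[ZMod n] (ZMod n × ZMod n × ZMod n))
    (f : ZMod 3 → ZMod n × ZMod n × ZMod n) (hf : ∀ i j, f (i + j) = r ^ j.val • f i + f j) :
    Kgrp n r hr ≃* Kgrp n r hr where
  toFun x := ⟨e x.v + f x.t, x.t⟩
  invFun x := ⟨e.symm (x.v - f x.t), x.t⟩
  left_inv x := by ext <;> simp
  right_inv x := by ext <;> simp
  map_mul' x y := by
    refine Kgrp.ext ?_ rfl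
    simp only [mul_def, map_add, map_smul, hf, smul_add]
    abel

@[simp] lemma affineEquiv_apply (e : (ZMod n × ZMod n × ZMod n) ≃ₗ[ZMod n] _)
    (f : ZMod 3 → ZMod n × ZMod n × ZMod n) (hf) (x : Kgrp n r hr) :
    affineEquiv e f hf x = ⟨e x.v + f x.t, x.t⟩ := rfl

variable (hr) in
/-- The inverse uses `r⁻¹ = r² = -(r + 1)`. -/
def linearPart : (ZMod n × ZMod n × ZMod n) ≃ₗ[ZMod n] (ZMod n × ZMod n × ZMod n) where
  toFun v := (r * v.2.1, -(r * v.1) - r * v.2.1, -v.1 + r * v.2.1 + r * v.2.2)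
  invFun v := ((r + 1) * (v.1 + v.2.1), -((r + 1) * v.1), v.1 - r * v.2.1 - (r + 1) * v.2.2)
  map_add' v w := by ext <;> simp only [Prod.fst_add, Prod.snd_add] <;> ring
  map_smul' s v := by
    ext <;> simp only [Prod.smul_fst, Prod.smul_snd, smul_eq_mul, RingHom.id_apply] <;> ring
  left_inv v := by
    ext <;> dsimp only
    · linear_combination (-v.1) * hr
    · linear_combination (-v.2.1) * hr
    · linear_combination (v.1 - v.2.2) * hr
  right_inv v := by
    ext <;> dsimp only
    · linear_combination (-v.1) * hr
    · linear_combination (-v.2.1) * hr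
    · linear_combination (-(v.1 + v.2.1 + v.2.2)) * hr

variable (r) in
/-- `f 2 = r • f 1 + f 1 = (-r² - r) • e₃ = e₃`. -/
def cocycle (t : ZMod 3) : ZMod n × ZMod n × ZMod n := (0, 0, ![0, -r, 1] t)

lemma cocycle_add (hr : r ^ 2 + r + 1 = 0) (i j : ZMod 3) :
    cocycle r (i + j) = r ^ j.val • cocycle r i + cocycle r j := by
  have h11 : (1 : ZMod 3) + 1 = 2 := rfl
  have h12 : (1 : ZMod 3) + 2 = 0 := rfl
  have h21 : (2 : ZMod 3) + 1 = 0 := rfl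
  have h22 : (2 : ZMod 3) + 2 = 1 := rfl
  have v1 : (1 : ZMod 3).val = 1 := rfl
  have v2 : (2 : ZMod 3).val = 2 := rfl
  have cases3 (k : ZMod 3) : k = 0 ∨ k = 1 ∨ k = 2 := by revert k; decide
  obtain rfl | rfl | rfl := cases3 i <;> obtain rfl | rfl | rfl := cases3 j <;>
    ext <;> simp [cocycle, h11, h12, h21, h22, v1, v2] <;> grind

end Kgrp

open Kgrp in
theorem stmt3_general (n : ℕ) (r : ZMod n) (hr : r ^ 2 + r + 1 = 0) :
    ∃ φ : Kgrp n r hr ≃* Kgrp n r hr,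
      φ (gena n r hr) = (genb n r hr) ^ (-r).val * (genc n r hr) ^ ((-1 : ZMod n)).val ∧
      φ (genb n r hr) = (gena n r hr) ^ r.val * (genb n r hr) ^ (-r).val * (genc n r hr) ^ r.val ∧
      φ (genc n r hr) = (genc n r hr) ^ r.val ∧
      φ (genh n r hr) = genh n r hr * (genc n r hr) ^ (-r).val := by
  have := neZero_of_sq_add_add_one_eq_zero hr
  refine ⟨affineEquiv (linearPart hr) (cocycle r) (cocycle_add hr), ?_, ?_, ?_, ?_⟩ <;>
    simp [gena, genb, genc, genh, mk_zero_pow_val, linearPart, cocycle]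

open Kgrp in
/-- There exists an automorphism of the group `K` sending
`a ↦ b^(−r)·c^(−1)`, `b ↦ a^r·b^(−r)·c^r`, `c ↦ c^r`, `h ↦ h·c^(−r)`,
where `x ^ s` for `s : ZMod n` denotes `x ^ s.val`. -/
theorem stmt3 (n : ℕ) (hn : 7 ≤ n) (r : ZMod n) (hr : r ^ 2 + r + 1 = 0) :
    ∃ φ : Kgrp n r hr ≃* Kgrp n r hr,
      φ (gena n r hr) = (genb n r hr) ^ (-r).val * (genc n r hr) ^ ((-1 : ZMod n)).val ∧
      φ (genb n r hr) = (gena n r hr) ^ r.val * (genb n r hr) ^ (-r).val * (genc n r hr) ^ r.val ∧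
      φ (genc n r hr) = (genc n r hr) ^ r.val ∧
      φ (genh n r hr) = genh n r hr * (genc n r hr) ^ (-r).val :=
  stmt3_general n r hr
end

section
/- There exists an automorphism of the group K sending a ↦ a^(−r²)·b^(r²)·c, b ↦ b^(r²), c ↦ a^(−r)·b^(−1), and h ↦ h·b. -/
namespace Kgrp

variable {n : ℕ} {r : ZMod n}

/-- geometric-series coefficient: `cf r t = 1 + r + ... + r^(t-1)`. -/
def cf (r : ZMod n) : ZMod 3 → ZMod n := fun t =>
  if t = 1 then 1 else if t = 2 then 1 + r else 0

lemma zmod3_cases : ∀ t : ZMod 3, t = 0 ∨ t = 1 ∨ t = 2 := by decide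

lemma cf_add (hr : r ^ 2 + r + 1 = 0) (i j : ZMod 3) :
    cf r (i + j) = r ^ j.val * cf r i + cf r j := by
  rcases zmod3_cases i with hi | hi | hi <;> rcases zmod3_cases j with hj | hj | hj <;>
    subst hi hj <;>
  · show cf r _ = r ^ _ * cf r _ + cf r _
    simp (config := { decide := true }) only [cf, if_true, if_false,
      show ZMod.val (0 : ZMod 3) = 0 from rfl, show ZMod.val (1 : ZMod 3) = 1 from rfl,
      show ZMod.val (2 : ZMod 3) = 2 from rfl, pow_zero, pow_one]
    first
      | ring1
      | linear_combination hr
      | linear_combination -hr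
      | linear_combination r * hr
      | linear_combination -r * hr
      | linear_combination (r + 1) * hr
      | linear_combination -(r + 1) * hr
      | linear_combination (r - 1) * hr

lemma pow_t_zero {hr : r ^ 2 + r + 1 = 0} (v : ZMod n × ZMod n × ZMod n) (k : ℕ) :
    (⟨v, 0⟩ : Kgrp n r hr) ^ k = ⟨(k : ZMod n) • v, 0⟩ := by
  induction k with
  | zero => simp
  | succ k ih =>
      rw [pow_succ, ih, mul_def]
      refine Kgrp.ext ?_ (by simp)
      show r ^ (0 : ZMod 3).val • ((k : ZMod n) • v) + v = ((k + 1 : ℕ) : ZMod n) • v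
      push_cast
      rw [show ZMod.val (0 : ZMod 3) = 0 from rfl, pow_zero, one_smul, add_smul, one_smul]

end Kgrp

open Kgrp in
/-- There exists an automorphism of the group `K` sending
`a ↦ a^(−r²)·b^(r²)·c`, `b ↦ b^(r²)`, `c ↦ a^(−r)·b^(−1)`, `h ↦ h·b`,
where `x ^ s` for `s : ZMod n` denotes `x ^ s.val`. -/
theorem stmt4 (n : ℕ) (hn : 7 ≤ n) (r : ZMod n) (hr : r ^ 2 + r + 1 = 0) :
    ∃ φ : Kgrp n r hr ≃* Kgrp n r hr,
      φ (gena n r hr) =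
        (gena n r hr) ^ (-(r ^ 2)).val * (genb n r hr) ^ ((r ^ 2)).val * genc n r hr ∧
      φ (genb n r hr) = (genb n r hr) ^ ((r ^ 2)).val ∧
      φ (genc n r hr) = (gena n r hr) ^ (-r).val * (genb n r hr) ^ ((-1 : ZMod n)).val ∧
      φ (genh n r hr) = genh n r hr * genb n r hr := by
  have hNZ : NeZero n := ⟨by omega⟩
  refine ⟨{ toFun := fun x => ⟨(-r ^ 2 * x.v.1 - r * x.v.2.2,
              r ^ 2 * x.v.1 + r ^ 2 * x.v.2.1 - x.v.2.2 + cf r x.t, x.v.1), x.t⟩,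
            invFun := fun x => ⟨(x.v.2.2,
              -x.v.1 + r * (x.v.2.1 - cf r x.t) + r * x.v.2.2,
              -r ^ 2 * x.v.1 - r * x.v.2.2), x.t⟩,
            left_inv := ?_, right_inv := ?_, map_mul' := ?_ }, ?_, ?_, ?_, ?_⟩
  · rintro ⟨⟨v1, v2, v3⟩, t⟩
    refine Kgrp.ext (Prod.ext ?_ (Prod.ext ?_ ?_)) rfl <;> dsimp only
    · linear_combination (r * v1 + (r - 1) * v2) * hr
    · linear_combination (r * (r - 1) * v1 + (r - 1) * v3) * hr
  · rintro ⟨⟨v1, v2, v3⟩, t⟩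
    refine Kgrp.ext (Prod.ext ?_ (Prod.ext ?_ ?_)) rfl <;> dsimp only
    · linear_combination (r - 1) * v1 * hr
    · linear_combination ((r - 1) * v2 + r * v3 - (r - 1) * (cf r t)) * hr
  · rintro ⟨⟨v1, v2, v3⟩, i⟩ ⟨⟨u1, u2, u3⟩, j⟩
    refine Kgrp.ext (Prod.ext ?_ (Prod.ext ?_ ?_)) rfl <;>
      dsimp only [mul_def, Prod.smul_mk, smul_eq_mul, Prod.mk_add_mk]
    · ring
    · rw [cf_add hr]; ring
  · show (⟨_, _⟩ : Kgrp n r hr) = _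
    rw [gena, genb, genc, pow_t_zero, pow_t_zero, mul_def, mul_def]
    refine Kgrp.ext (Prod.ext ?_ (Prod.ext ?_ ?_)) rfl <;>
      simp (config := { decide := true }) [cf, ZMod.natCast_val, ZMod.cast_id,
        show ZMod.val (0 : ZMod 3) = 0 from rfl]
  · show (⟨_, _⟩ : Kgrp n r hr) = _
    rw [genb, pow_t_zero]
    refine Kgrp.ext (Prod.ext ?_ (Prod.ext ?_ ?_)) rfl <;>
      simp (config := { decide := true }) [cf, ZMod.natCast_val, ZMod.cast_id]
  · show (⟨_, _⟩ : Kgrp n r hr) = _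
    rw [genc, gena, genb, pow_t_zero, pow_t_zero, mul_def]
    refine Kgrp.ext (Prod.ext ?_ (Prod.ext ?_ ?_)) rfl <;>
      simp (config := { decide := true }) [cf, ZMod.natCast_val, ZMod.cast_id,
        show ZMod.val (0 : ZMod 3) = 0 from rfl]
  · show (⟨_, _⟩ : Kgrp n r hr) = _
    rw [genh, genb, mul_def]
    refine Kgrp.ext (Prod.ext ?_ (Prod.ext ?_ ?_)) rfl <;>
      simp (config := { decide := true }) [cf, show ZMod.val (0 : ZMod 3) = 0 from rfl]
end

section
/- Let Γ be a finite connected cubic (3-regular) simple graph and let G be a group of automorphisms of Γ that acts simply transitively (transitively and freely) on the set of 2-arcs of Γ, and suppose no element of order 2 in G reverses an edge of Γ (i.e. G is of type 2²). Then no subgroup of G acts simply transitively on the set of arcs (ordered pairs of adjacent vertices) of Γ; that is, G has no 1-regular subgroup. -/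
/-- Let `Γ` be a finite connected cubic (3-regular) simple graph
and let `G` be a group of automorphisms of `Γ` that acts simply transitively
(transitively and freely) on the set of 2-arcs of `Γ`, and suppose no element of
order 2 in `G` reverses an edge of `Γ` (i.e. `G` is of type `2²`).  Then no
subgroup of `G` acts simply transitively on the set of arcs (ordered pairs of
adjacent vertices) of `Γ`; that is, `G` has no 1-regular subgroup. -/
theorem stmt19 {V : Type*} [Fintype V] (Γ : SimpleGraph V)
    (hconn : Γ.Connected)
    (hcubic : ∀ v : V, (Γ.neighborSet v).ncard = 3)
    (G : Subgroup (Γ ≃g Γ))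
    (h2reg : ∀ s t : V × V × V,
      (Γ.Adj s.1 s.2.1 ∧ Γ.Adj s.2.1 s.2.2 ∧ s.1 ≠ s.2.2) →
      (Γ.Adj t.1 t.2.1 ∧ Γ.Adj t.2.1 t.2.2 ∧ t.1 ≠ t.2.2) →
      ∃! g : Γ ≃g Γ, g ∈ G ∧ g s.1 = t.1 ∧ g s.2.1 = t.2.1 ∧ g s.2.2 = t.2.2)
    (htype : ¬ ∃ g ∈ G, orderOf g = 2 ∧ ∃ p q : V, Γ.Adj p q ∧ g p = q ∧ g q = p) :
    ¬ ∃ H : Subgroup (Γ ≃g Γ), H ≤ G ∧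
        ∀ s t : V × V, Γ.Adj s.1 s.2 → Γ.Adj t.1 t.2 →
          ∃! g : Γ ≃g Γ, g ∈ H ∧ g s.1 = t.1 ∧ g s.2 = t.2 := by
  rintro ⟨H, hHG, hH⟩
  -- get an edge
  obtain ⟨v⟩ := hconn.nonempty
  have hne : (Γ.neighborSet v).Nonempty := by
    rw [← Set.ncard_pos (Set.toFinite _), hcubic v]; norm_num
  obtain ⟨q, hq⟩ := hne
  have hadj : Γ.Adj v q := hq
  -- element of H reversing the arc (v, q)
  obtain ⟨h, ⟨hhH, hv, hq'⟩, -⟩ := hH (v, q) (q, v) hadj hadj.symm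
  -- h * h fixes the arc (v, q), hence h * h = 1 by uniqueness
  obtain ⟨e, -, heuniq⟩ := hH (v, q) (v, q) hadj hadj
  have hmul : ∀ x : V, (h * h) x = h (h x) := fun x => rfl
  have hsq : h * h = 1 := by
    have h1 : h * h = e := heuniq (h * h) ⟨mul_mem hhH hhH, by rw [hmul, hv, hq'], by rw [hmul, hq', hv]⟩
    have h2 : (1 : Γ ≃g Γ) = e := heuniq 1 ⟨one_mem H, rfl, rfl⟩
    rw [h1, h2]
  have hne1 : h ≠ 1 := by
    intro hcon
    apply Γ.ne_of_adj hadj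
    have := hv
    rw [hcon] at this
    exact this
  have hord : orderOf h = 2 := by
    have := orderOf_eq_prime (by rw [pow_two]; exact hsq) hne1
    exact this
  exact htype ⟨h, hHG hhH, hord, v, q, hadj, hv, hq'⟩
end
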